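/- For every n, the matrix exponential restricted to the set t_n(ℝ) of upper triangular n×n real matrices is a homeomorphism onto the set T_n^+(ℝ) of upper triangular n×n real matrices with all diagonal entries positive; that is, there is a homeomorphism h from t_n(ℝ) (with the subspace topology from the space of n×n real matrices) onto T_n^+(ℝ) such that h(A) = exp(A) for every A ∈ t_n(ℝ). -/

import Mathlib

/-!
If upper triangular `A` and `B` agree below the `d`-th superdiagonal, so do all their powers,
and on that superdiagonal
`(A ^ m - B ^ m) i j = (∑ p < m, A i i ^ p * B j j ^ (m - 1 - p)) * (A - B) i j`.
Summing the exponential series gives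
`(exp A - exp B) i j = expDivDiff (A i i) (B j j) * (A - B) i j`, where
`expDivDiff x y = (exp x - exp y) / (x - y)`, extended by `exp x` at `x = y`, is positive.

So `exp A` determines `A` one superdiagonal at a time. Conversely, for `B` with positive diagonal,
start from the diagonal matrix of the `log (B i i)` and correct one superdiagonal at a time by
`(B - exp L) i j / expDivDiff (L i i) (L j j)`; after `n` steps this gives a logarithm of `B`.
It depends continuously on `B`, because `expDivDiff x y` is the `(0, 1)` entry of
`exp !![x, 1; 0, y]`.
-/

open Matrix NormedSpace Finset
open scoped Nat

theorem pow_succ_sub_pow_succ {α : Type*} [Ring α] (a b : α) (m : ℕ) :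
    a ^ (m + 1) - b ^ (m + 1) = (a ^ m - b ^ m) * b + a ^ m * (a - b) := by
  rw [pow_succ a, pow_succ b, sub_mul, mul_sub]
  abel

namespace Matrix

variable {R : Type*} {n : ℕ}

/-- `VanishesBelow 0` means upper triangular, `VanishesBelow 1` strictly upper triangular. -/
def VanishesBelow [Zero R] (d : ℕ) (C : Matrix (Fin n) (Fin n) R) : Prop :=
  ∀ k l : Fin n, (l : ℕ) < k + d → C k l = 0

def superdiag [Zero R] (d : ℕ) (f : Fin n → Fin n → R) : Matrix (Fin n) (Fin n) R :=
  of fun i j => if (j : ℕ) = i + d then f i j else 0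

section VanishesBelow

variable {d e : ℕ} {A B C D : Matrix (Fin n) (Fin n) R}

theorem vanishesBelow_zero_iff [Zero R] : VanishesBelow 0 A ↔ A.BlockTriangular id := by
  simp only [VanishesBelow, BlockTriangular, id, add_zero, Fin.lt_def]

theorem VanishesBelow.eq_zero [Zero R] (hC : VanishesBelow n C) : C = 0 :=
  ext fun k l => hC k l (by omega)

theorem VanishesBelow.succ [Zero R] (hC : VanishesBelow d C)
    (hdiag : ∀ i j : Fin n, (j : ℕ) = i + d → C i j = 0) : VanishesBelow (d + 1) C := by
  intro k l hkl
  rcases lt_or_eq_of_le (Nat.le_of_lt_succ hkl) with h | h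
  · exact hC k l h
  · exact hdiag k l h

theorem vanishesBelow_superdiag [Zero R] (f : Fin n → Fin n → R) :
    VanishesBelow d (superdiag d f) := fun k l hkl => if_neg (by omega)

theorem superdiag_apply_of_eq [Zero R] (f : Fin n → Fin n → R) {i j : Fin n}
    (hij : (j : ℕ) = i + d) : superdiag d f i j = f i j :=
  if_pos hij

theorem VanishesBelow.sub [AddGroup R] (hC : VanishesBelow d C) (hD : VanishesBelow d D) :
    VanishesBelow d (C - D) := fun k l hkl => by simp [hC k l hkl, hD k l hkl]

theorem VanishesBelow.mono [Zero R] (hde : d ≤ e) (hC : VanishesBelow e C) :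
    VanishesBelow d C := fun k l hkl => hC k l (by omega)

theorem VanishesBelow.add [AddZeroClass R] (hC : VanishesBelow d C) (hD : VanishesBelow d D) :
    VanishesBelow d (C + D) := fun k l hkl => by simp [hC k l hkl, hD k l hkl]

theorem VanishesBelow.mul [NonUnitalNonAssocSemiring R] (hC : VanishesBelow d C)
    (hD : VanishesBelow e D) : VanishesBelow (d + e) (C * D) := by
  intro k l hkl
  rw [mul_apply]
  refine sum_eq_zero fun m _ => ?_
  rcases lt_or_ge (m : ℕ) (k + d) with h | h
  · rw [hC k m h, zero_mul]
  · rw [hD m l (by omega), mul_zero]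

theorem VanishesBelow.mul_apply_of_eq [NonUnitalNonAssocSemiring R] (hC : VanishesBelow d C)
    (hD : VanishesBelow e D) {i m j : Fin n} (hm : (m : ℕ) = i + d) (hj : (j : ℕ) = m + e) :
    (C * D) i j = C i m * D m j := by
  rw [mul_apply]
  refine sum_eq_single m (fun m' _ hm' => ?_) (by simp)
  rcases lt_or_gt_of_ne (Fin.val_ne_of_ne hm') with h | h
  · rw [hC i m' (by omega), zero_mul]
  · rw [hD m' j (by omega), mul_zero]

theorem VanishesBelow.pow [Semiring R] (hA : VanishesBelow 0 A) (m : ℕ) :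
    VanishesBelow 0 (A ^ m) :=
  vanishesBelow_zero_iff.2 ((vanishesBelow_zero_iff.1 hA).pow m)

theorem VanishesBelow.pow_apply_self [Semiring R] (hA : VanishesBelow 0 A) (i : Fin n) (m : ℕ) :
    (A ^ m) i i = A i i ^ m := by
  induction m with
  | zero => simp
  | succ m ih => rw [pow_succ, (hA.pow m).mul_apply_of_eq hA rfl rfl, ih, pow_succ]

theorem VanishesBelow.pow_sub_pow [Ring R] (hA : VanishesBelow 0 A) (hB : VanishesBelow 0 B)
    (hAB : VanishesBelow d (A - B)) (m : ℕ) : VanishesBelow d (A ^ m - B ^ m) := by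
  induction m with
  | zero => rw [pow_zero, pow_zero, sub_self]; exact fun _ _ _ => rfl
  | succ m ih =>
    rw [pow_succ_sub_pow_succ]
    intro k l hkl
    rw [add_apply, ih.mul hB k l hkl, (hA.pow m).mul hAB k l (by omega), add_zero]

theorem VanishesBelow.pow_sub_pow_apply_of_eq [CommRing R] (hA : VanishesBelow 0 A)
    (hB : VanishesBelow 0 B) (hAB : VanishesBelow d (A - B)) {i j : Fin n}
    (hij : (j : ℕ) = i + d) (m : ℕ) :
    (A ^ m - B ^ m) i j = (∑ p ∈ range m, A i i ^ p * B j j ^ (m - 1 - p)) * (A - B) i j := by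
  induction m with
  | zero => simp
  | succ m ih =>
    rw [pow_succ_sub_pow_succ, add_apply, (hA.pow_sub_pow hB hAB m).mul_apply_of_eq hB hij rfl,
      (hA.pow m).mul_apply_of_eq hAB rfl hij, ih, hA.pow_apply_self,
      Nat.add_sub_cancel, geom_sum₂_succ_eq]
    ring

end VanishesBelow

end Matrix

theorem Real.hasSum_exp (x : ℝ) : HasSum (fun m => (m ! : ℝ)⁻¹ * x ^ m) (Real.exp x) := by
  simpa only [Real.exp_eq_exp_ℝ, smul_eq_mul] using exp_series_hasSum_exp' (𝕂 := ℝ) x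

noncomputable def expDivDiff (x y : ℝ) : ℝ :=
  ∑' m : ℕ, (m ! : ℝ)⁻¹ * ∑ p ∈ range m, x ^ p * y ^ (m - 1 - p)

theorem expDivDiff_mul_sub (x y : ℝ) : expDivDiff x y * (x - y) = Real.exp x - Real.exp y := by
  rw [expDivDiff, ← tsum_mul_right, ← ((Real.hasSum_exp x).sub (Real.hasSum_exp y)).tsum_eq]
  exact tsum_congr fun m => by rw [mul_assoc, geom_sum₂_mul, mul_sub]

theorem expDivDiff_self (x : ℝ) : expDivDiff x x = Real.exp x := by
  have h := (hasSum_nat_add_iff (f := fun m => (m ! : ℝ)⁻¹ * ∑ p ∈ range m, x ^ p * x ^ (m - 1 - p))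
    1).1 <| (Real.hasSum_exp x).congr_fun fun m => by
      rw [geom_sum₂_self, Nat.factorial_succ, Nat.add_sub_cancel]
      push_cast
      field_simp
  rw [expDivDiff]
  simpa using h.tsum_eq

theorem expDivDiff_pos (x y : ℝ) : 0 < expDivDiff x y := by
  rcases lt_trichotomy x y with h | rfl | h
  · by_contra! hc
    nlinarith [Real.exp_lt_exp.2 h, expDivDiff_mul_sub x y]
  · exact expDivDiff_self x ▸ Real.exp_pos x
  · by_contra! hc
    nlinarith [Real.exp_lt_exp.2 h, expDivDiff_mul_sub x y]

namespace Matrix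

variable {n d : ℕ} {A B : Matrix (Fin n) (Fin n) ℝ}

open scoped Norms.Operator in
theorem continuous_exp {m : Type*} [Fintype m] [DecidableEq m] :
    Continuous (exp : Matrix m m ℝ → Matrix m m ℝ) :=
  exp_continuous

theorem hasSum_exp_apply (A : Matrix (Fin n) (Fin n) ℝ) (i j : Fin n) :
    HasSum (fun m => (m ! : ℝ)⁻¹ * (A ^ m) i j) (exp A i j) :=
  open scoped Norms.Operator in Pi.hasSum.1 (Pi.hasSum.1 (exp_series_hasSum_exp' (𝕂 := ℝ) A) i) j

theorem VanishesBelow.exp_apply_self (hA : VanishesBelow 0 A) (i : Fin n) :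
    exp A i i = Real.exp (A i i) :=
  (hasSum_exp_apply A i i).unique (by simpa only [hA.pow_apply_self] using Real.hasSum_exp (A i i))

theorem VanishesBelow.exp_sub_exp (hA : VanishesBelow 0 A) (hB : VanishesBelow 0 B)
    (hAB : VanishesBelow d (A - B)) : VanishesBelow d (exp A - exp B) := by
  intro k l hkl
  have h := (hasSum_exp_apply A k l).sub (hasSum_exp_apply B k l)
  simp only [← mul_sub, ← sub_apply, hA.pow_sub_pow hB hAB _ k l hkl, mul_zero] at h
  rw [sub_apply]
  exact h.unique hasSum_zero

theorem VanishesBelow.exp_sub_exp_apply_of_eq (hA : VanishesBelow 0 A) (hB : VanishesBelow 0 B)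
    (hAB : VanishesBelow d (A - B)) {i j : Fin n} (hij : (j : ℕ) = i + d) :
    (exp A - exp B) i j = expDivDiff (A i i) (B j j) * (A - B) i j := by
  have h := (hasSum_exp_apply A i j).sub (hasSum_exp_apply B i j)
  simp only [← mul_sub, ← sub_apply, hA.pow_sub_pow_apply_of_eq hB hAB hij, ← mul_assoc] at h
  rw [← h.tsum_eq, tsum_mul_right, expDivDiff]

end Matrix

theorem expDivDiff_eq_exp_apply (x y : ℝ) : expDivDiff x y = exp !![x, 1; 0, y] 0 1 := by
  have hA : VanishesBelow 0 !![x, 1; 0, y] := by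
    intro k l h; fin_cases k <;> fin_cases l <;> simp at h ⊢
  have hB : VanishesBelow 0 (diagonal ![x, y]) :=
    vanishesBelow_zero_iff.2 (blockTriangular_diagonal _)
  have hAB : VanishesBelow 1 (!![x, 1; 0, y] - diagonal ![x, y]) := by
    intro k l h; fin_cases k <;> fin_cases l <;> simp at h ⊢
  have h := hA.exp_sub_exp_apply_of_eq hB hAB (i := 0) (j := 1) rfl
  rw [exp_diagonal] at h
  simpa using h.symm

theorem Continuous.expDivDiff {X : Type*} [TopologicalSpace X] {f g : X → ℝ} (hf : Continuous f)
    (hg : Continuous g) : Continuous fun x => expDivDiff (f x) (g x) := by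
  simp only [expDivDiff_eq_exp_apply]
  refine (continuous_exp.comp (continuous_matrix fun i j => ?_)).matrix_elem 0 1
  fin_cases i <;> fin_cases j <;> simp <;> fun_prop

namespace Matrix

variable {n : ℕ}

noncomputable def logApprox (B : Matrix (Fin n) (Fin n) ℝ) : ℕ → Matrix (Fin n) (Fin n) ℝ
  | 0 => diagonal fun i => Real.log (B i i)
  | d + 1 => logApprox B d + superdiag (d + 1) fun i j =>
      (B i j - exp (logApprox B d) i j) / expDivDiff (logApprox B d i i) (logApprox B d j j)

theorem vanishesBelow_logApprox (B : Matrix (Fin n) (Fin n) ℝ) :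
    ∀ d, VanishesBelow 0 (logApprox B d)
  | 0 => vanishesBelow_zero_iff.2 (blockTriangular_diagonal _)
  | d + 1 => (vanishesBelow_logApprox B d).add ((vanishesBelow_superdiag _).mono (Nat.zero_le _))

theorem logApprox_apply_self (B : Matrix (Fin n) (Fin n) ℝ) (i : Fin n) :
    ∀ d, logApprox B d i i = Real.log (B i i)
  | 0 => diagonal_apply_eq _ i
  | d + 1 => by
    rw [logApprox, add_apply, logApprox_apply_self B i d, vanishesBelow_superdiag _ i i (by omega),
      add_zero]

theorem logApprox_succ_sub (B : Matrix (Fin n) (Fin n) ℝ) (d : ℕ) :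
    logApprox B (d + 1) - logApprox B d = superdiag (d + 1) fun i j =>
      (B i j - exp (logApprox B d) i j) / expDivDiff (logApprox B d i i) (logApprox B d j j) :=
  add_sub_cancel_left _ _

theorem vanishesBelow_exp_logApprox_sub {B : Matrix (Fin n) (Fin n) ℝ}
    (hB : VanishesBelow 0 B) (hpos : ∀ i, 0 < B i i) :
    ∀ d, VanishesBelow (d + 1) (exp (logApprox B d) - B)
  | 0 => by
    have hL : (logApprox B 0).BlockTriangular id := blockTriangular_diagonal _
    refine ((vanishesBelow_zero_iff.2 hL.exp).sub hB).succ fun i j hij => ?_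
    obtain rfl : j = i := Fin.ext hij
    rw [sub_apply, (vanishesBelow_zero_iff.2 hL).exp_apply_self, logApprox_apply_self,
      Real.exp_log (hpos _), sub_self]
  | d + 1 => by
    have hL := vanishesBelow_logApprox B d
    have hL' := vanishesBelow_logApprox B (d + 1)
    have hstep : VanishesBelow (d + 1) (logApprox B (d + 1) - logApprox B d) :=
      logApprox_succ_sub B d ▸ vanishesBelow_superdiag _
    rw [← sub_add_sub_cancel _ (exp (logApprox B d))]
    refine ((hL'.exp_sub_exp hL hstep).add (vanishesBelow_exp_logApprox_sub hB hpos d)).succ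
      fun i j hij => ?_
    rw [add_apply, hL'.exp_sub_exp_apply_of_eq hL hstep hij, logApprox_succ_sub,
      superdiag_apply_of_eq _ hij, logApprox_apply_self, ← logApprox_apply_self B i d,
      mul_div_cancel₀ _ (expDivDiff_pos _ _).ne', sub_apply]
    ring

theorem exp_logApprox {B : Matrix (Fin n) (Fin n) ℝ} (hB : B.BlockTriangular id)
    (hpos : ∀ i, 0 < B i i) : exp (logApprox B n) = B :=
  sub_eq_zero.1 ((vanishesBelow_exp_logApprox_sub (vanishesBelow_zero_iff.2 hB) hpos n).mono
    (Nat.le_succ n)).eq_zero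

theorem injOn_exp_blockTriangular :
    Set.InjOn exp {A : Matrix (Fin n) (Fin n) ℝ | A.BlockTriangular id} := by
  intro A hA B hB h
  replace hA := vanishesBelow_zero_iff.2 hA
  replace hB := vanishesBelow_zero_iff.2 hB
  suffices ∀ d, VanishesBelow d (A - B) from sub_eq_zero.1 (this n).eq_zero
  intro d
  induction d with
  | zero => exact hA.sub hB
  | succ d ih =>
    refine ih.succ fun i j hij => ?_
    have hentry := hA.exp_sub_exp_apply_of_eq hB ih hij
    rw [h, sub_self, zero_apply] at hentry
    exact (mul_eq_zero.1 hentry.symm).resolve_left (expDivDiff_pos _ _).ne'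

end Matrix

theorem Continuous.matrix_superdiag {X R : Type*} [TopologicalSpace X] [TopologicalSpace R]
    [Zero R] {n d : ℕ} {f : X → Fin n → Fin n → R} (hf : ∀ i j, Continuous fun x => f x i j) :
    Continuous fun x => superdiag d (f x) :=
  continuous_matrix fun i j => (hf i j).if_const _ continuous_const

theorem Continuous.matrix_logApprox {X : Type*} [TopologicalSpace X] {n : ℕ}
    {F : X → Matrix (Fin n) (Fin n) ℝ} (hF : Continuous F) (hF0 : ∀ x i, F x i i ≠ 0) :
    ∀ d, Continuous fun x => logApprox (F x) d
  | 0 => Continuous.matrix_diagonal <| continuous_pi fun i => (hF.matrix_elem i i).log (hF0 · i)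
  | d + 1 => by
    have ih := Continuous.matrix_logApprox hF hF0 d
    refine ih.add (Continuous.matrix_superdiag fun i j => ?_)
    exact ((hF.matrix_elem i j).sub ((continuous_exp.comp ih).matrix_elem i j)).div
      ((ih.matrix_elem i i).expDivDiff (ih.matrix_elem j j)) fun _ => (expDivDiff_pos _ _).ne'

/-- the matrix exponential restricted to the upper triangular real matrices
is a homeomorphism onto the upper triangular real matrices with positive diagonal
entries (both carrying the subspace topology). -/
theorem stmt_7 (n : ℕ) :
    ∃ h : {A : Matrix (Fin n) (Fin n) ℝ // A.BlockTriangular id} ≃ₜ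
          {B : Matrix (Fin n) (Fin n) ℝ // B.BlockTriangular id ∧ ∀ i, 0 < B i i},
      ∀ A : {A : Matrix (Fin n) (Fin n) ℝ // A.BlockTriangular id},
        (h A : Matrix (Fin n) (Fin n) ℝ) = NormedSpace.exp (A : Matrix (Fin n) (Fin n) ℝ) := by
  have hexp_pos (A : {A : Matrix (Fin n) (Fin n) ℝ // A.BlockTriangular id}) (i : Fin n) :
      0 < exp A.1 i i :=
    (vanishesBelow_zero_iff.2 A.2).exp_apply_self i ▸ Real.exp_pos _
  refine ⟨{
    toFun A := ⟨exp A.1, A.2.exp, hexp_pos A⟩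
    invFun B := ⟨logApprox B.1 n, vanishesBelow_zero_iff.1 (vanishesBelow_logApprox _ n)⟩
    left_inv A := Subtype.ext <| injOn_exp_blockTriangular
      (vanishesBelow_zero_iff.1 (vanishesBelow_logApprox _ n)) A.2
      (exp_logApprox A.2.exp (hexp_pos A))
    right_inv B := Subtype.ext (exp_logApprox B.2.1 B.2.2)
    continuous_toFun := (continuous_exp.comp continuous_subtype_val).subtype_mk _
    continuous_invFun :=
      (continuous_subtype_val.matrix_logApprox (fun B i => (B.2.2 i).ne') n).subtype_mk _ },
    fun _ => rfl⟩
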